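/- The number of permutations of size n that require exactly n−1 passes of bubblesort to be sorted (the maximum possible) is (n−1)!; these are exactly the permutations ending with the entry 1. -/

import Mathlib

/-- One pass of bubblesort on a list of naturals. -/
def bpass : List ℕ → List ℕ
  | [] => []
  | [a] => [a]
  | a :: b :: l => if b < a then b :: bpass (a :: l) else a :: bpass (b :: l)

/-- The identity permutation 1 2 ... n as a list. -/
def idList (n : ℕ) : List ℕ := List.map (· + 1) (List.range n)

/-- `l` is (the word of) a permutation of size `n`, i.e. a rearrangement of 1,...,n. -/
def IsPermList (n : ℕ) (l : List ℕ) : Prop := l.Perm (idList n)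

/-- position `j` of `l` holds a left-to-right maximum. -/
def IsLTRMax (l : List ℕ) (j : ℕ) : Prop :=
  j < l.length ∧ ∀ i < j, l.getD i 0 < l.getD j 0

instance (l : List ℕ) (j : ℕ) : Decidable (IsLTRMax l j) := by
  unfold IsLTRMax; infer_instance

/-- the number of left-to-right maxima of `l`. -/
def ltrCount (l : List ℕ) : ℕ :=
  ((List.range l.length).filter fun j => decide (IsLTRMax l j)).length

/-- the length of the longest suffix of `l` consisting of left-to-right maxima. -/
def suffLen (l : List ℕ) : ℕ :=
  ((List.range l.length).takeWhile fun j => decide (IsLTRMax l (l.length - 1 - j))).length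

/-- `σ` is a node of the tree `T(π)` of iterated bubblesort preimages. -/
def IsNode (n : ℕ) (π σ : List ℕ) : Prop :=
  IsPermList n σ ∧ ∃ j, bpass^[j] σ = π

/-- `σ` is a node of `T(π)` at height `j` (j passes needed to reach π, and no fewer). -/
def IsNodeAt (n : ℕ) (π σ : List ℕ) (j : ℕ) : Prop :=
  IsPermList n σ ∧ bpass^[j] σ = π ∧ ∀ i < j, bpass^[i] σ ≠ π

/-- `τ` is a leaf: it has no child, i.e. no bubblesort preimage other than itself. -/
def IsLeafNode (n : ℕ) (τ : List ℕ) : Prop :=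
  ¬ ∃ ρ, IsPermList n ρ ∧ ρ ≠ τ ∧ bpass ρ = τ

/-- `T(π)` and `T(τ)` are isomorphic as rooted trees: there is a bijection between
their node sets sending root to root and commuting with the parent map `bpass`. -/
def TreeIso (n : ℕ) (π τ : List ℕ) : Prop :=
  ∃ φ : List ℕ → List ℕ,
    (∀ σ, IsNode n π σ → IsNode n τ (φ σ)) ∧
    (∀ σ σ', IsNode n π σ → IsNode n π σ' → φ σ = φ σ' → σ = σ') ∧
    (∀ ρ, IsNode n τ ρ → ∃ σ, IsNode n π σ ∧ φ σ = ρ) ∧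
    φ π = τ ∧
    (∀ σ, IsNode n π σ → σ ≠ π → φ (bpass σ) = bpass (φ σ))

/-!
One pass of bubblesort carries a largest entry to the end, so `k` passes sort every list of
length `k + 1`, and they already sort a list of length `k + 2` whose minimum stands at position
at most `k`. On the other hand each pass moves the minimum exactly one step to the left. Hence a
permutation of size `n` needs all `n - 1` passes exactly when `1` is its last entry, and deleting
that entry puts these permutations in bijection with the `(n - 1)!` arrangements of `2, …, n`.
-/

open List

theorem bpass_perm (l : List ℕ) : bpass l ~ l := by
  induction l using bpass.induct with
  | case1 | case2 => simp [bpass]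
  | case3 a b l h ih => simpa only [bpass, if_pos h] using (ih.cons b).trans (Perm.swap a b l)
  | case4 a b l h ih => simpa only [bpass, if_neg h] using ih.cons a

theorem iterate_bpass_perm (k : ℕ) (l : List ℕ) : bpass^[k] l ~ l := by
  induction k generalizing l with
  | zero => rfl
  | succ k ih => exact (ih (bpass l)).trans (bpass_perm l)

theorem bpass_append_singleton_of_le {m : ℕ} (l : List ℕ) (hm : ∀ x ∈ l, x ≤ m) :
    bpass (l ++ [m]) = bpass l ++ [m] := by
  induction l using bpass.induct with
  | case1 => simp [bpass]
  | case2 a => simp [bpass, not_lt.2 (hm a (mem_singleton_self a))]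
  | case3 a b l h ih => simp_all [bpass]
  | case4 a b l h ih => simp only [cons_append, bpass, if_neg h]; simp_all

theorem iterate_bpass_append_singleton_of_le {m : ℕ} (k : ℕ) (l : List ℕ)
    (hm : ∀ x ∈ l, x ≤ m) : bpass^[k] (l ++ [m]) = bpass^[k] l ++ [m] := by
  induction k generalizing l with
  | zero => rfl
  | succ k ih =>
    simp only [Function.iterate_succ_apply, bpass_append_singleton_of_le l hm]
    exact ih (bpass l) fun x hx => hm x ((bpass_perm l).subset hx)

theorem pairwise_iterate_bpass_append_singleton {m k : ℕ} {l : List ℕ} (hm : ∀ x ∈ l, x ≤ m)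
    (hl : (bpass^[k] l).Pairwise (· ≤ ·)) : (bpass^[k] (l ++ [m])).Pairwise (· ≤ ·) := by
  rw [iterate_bpass_append_singleton_of_le k l hm, pairwise_append]
  refine ⟨hl, pairwise_singleton _ m, fun x hx y hy => ?_⟩
  rw [mem_singleton.1 hy]
  exact hm x ((iterate_bpass_perm k l).subset hx)

theorem exists_bpass_eq_append_max {l : List ℕ} (hl : l ≠ []) :
    ∃ l' m, bpass l = l' ++ [m] ∧ ∀ x ∈ l, x ≤ m := by
  induction l using bpass.induct with
  | case1 => exact absurd rfl hl
  | case2 a => exact ⟨[], a, by simp [bpass], by simp⟩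
  | case3 a b l h ih =>
    obtain ⟨l', m, hb, hm⟩ := ih (cons_ne_nil a l)
    refine ⟨b :: l', m, by rw [bpass, if_pos h, hb, cons_append], ?_⟩
    have : b ≤ m := h.le.trans (hm a (mem_cons_self ..))
    simp_all
  | case4 a b l h ih =>
    obtain ⟨l', m, hb, hm⟩ := ih (cons_ne_nil b l)
    refine ⟨a :: l', m, by rw [bpass, if_neg h, hb, cons_append], ?_⟩
    have : a ≤ m := (not_lt.1 h).trans (hm b (mem_cons_self ..))
    simp_all

theorem pairwise_iterate_bpass_of_length_le {k : ℕ} {l : List ℕ} (hlen : l.length ≤ k + 1) :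
    (bpass^[k] l).Pairwise (· ≤ ·) := by
  induction k generalizing l with
  | zero => rcases l with _ | ⟨a, _ | ⟨b, t⟩⟩ <;> simp_all
  | succ k ih =>
    rcases eq_or_ne l [] with rfl | hl
    · exact ih (by simp [bpass])
    obtain ⟨l', m, hb, hm⟩ := exists_bpass_eq_append_max hl
    have hperm : l' ++ [m] ~ l := hb ▸ bpass_perm l
    rw [Function.iterate_succ_apply, hb]
    refine pairwise_iterate_bpass_append_singleton (fun x hx => hm x (hperm.subset ?_)) ?_
    · simp [hx]
    · exact ih (by simpa [← hperm.length_eq] using hlen)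

theorem idxOf_bpass_of_forall_le {a : ℕ} {l : List ℕ} (ha : a ∈ l) (hmin : ∀ x ∈ l, a ≤ x) :
    (bpass l).idxOf a = l.idxOf a - 1 := by
  induction l using bpass.induct with
  | case1 => simp at ha
  | case2 x => simp_all [bpass]
  | case3 x y l h ih =>
    have hxa : x ≠ a := by rintro rfl; exact absurd (hmin y (by simp)) (not_le.2 h)
    rw [bpass, if_pos h, idxOf_cons_ne _ hxa]
    by_cases hya : y = a
    · subst hya; simp
    · have hal : a ∈ l := by grind
      rw [idxOf_cons_ne _ hya, idxOf_cons_ne _ hya, ih (by simp [hal]) (by simp_all),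
        idxOf_cons_ne _ hxa]
      simp
  | case4 x y l h ih =>
    rw [bpass, if_neg h]
    by_cases hxa : x = a
    · subst hxa; simp
    · have hya : y ≠ a := by
        rintro rfl; exact hxa (le_antisymm (not_lt.1 h) (hmin x (by simp)))
      have hal : a ∈ l := by grind
      rw [idxOf_cons_ne _ hxa, idxOf_cons_ne _ hxa, ih (by simp [hal]) (by simp_all),
        idxOf_cons_ne _ hya]
      simp

theorem idxOf_iterate_bpass_of_forall_le {a : ℕ} {l : List ℕ} (ha : a ∈ l)
    (hmin : ∀ x ∈ l, a ≤ x) (k : ℕ) : (bpass^[k] l).idxOf a = l.idxOf a - k := by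
  induction k generalizing l with
  | zero => rfl
  | succ k ih =>
    have hperm := bpass_perm l
    rw [Function.iterate_succ_apply, ih (hperm.mem_iff.2 ha) (fun x hx => hmin x (hperm.subset hx)),
      idxOf_bpass_of_forall_le ha hmin]
    omega

theorem pairwise_iterate_bpass_of_idxOf_le {a k : ℕ} {l : List ℕ} (ha : a ∈ l)
    (hmin : ∀ x ∈ l, a ≤ x) (hlen : l.length ≤ k + 2) (hidx : l.idxOf a ≤ k) :
    (bpass^[k] l).Pairwise (· ≤ ·) := by
  induction k generalizing l with
  | zero =>
    rcases l with _ | ⟨b, t⟩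
    · simp at ha
    obtain rfl : a = b := by
      by_contra hb
      simp [idxOf_cons_ne _ (Ne.symm hb)] at hidx
    exact pairwise_cons.2 ⟨fun x hx => hmin x (mem_cons_of_mem a hx),
      pairwise_iterate_bpass_of_length_le (k := 0) (by simpa using hlen)⟩
  | succ k ih =>
    rcases le_or_gt l.length (k + 2) with hshort | hlong
    · exact pairwise_iterate_bpass_of_length_le hshort
    obtain ⟨l', m, hb, hm⟩ := exists_bpass_eq_append_max (ne_nil_of_mem ha)
    have hperm : l' ++ [m] ~ l := hb ▸ bpass_perm l
    have hidx' : (l' ++ [m]).idxOf a ≤ k := by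
      rw [← hb, idxOf_bpass_of_forall_le ha hmin]; omega
    have hlen' : l'.length = k + 2 := by
      have := hperm.length_eq
      simp only [length_append, length_singleton] at this
      omega
    have ha' : a ∈ l' := by
      by_contra h
      rw [idxOf_append_of_notMem h] at hidx'
      omega
    rw [Function.iterate_succ_apply, hb]
    refine pairwise_iterate_bpass_append_singleton (fun x hx => hm x (hperm.subset ?_)) ?_
    · simp [hx]
    · exact ih ha' (fun x hx => hmin x (hperm.subset (by simp [hx]))) hlen'.le
        (by rwa [idxOf_append_of_mem ha'] at hidx')

theorem length_idList (n : ℕ) : (idList n).length = n := by simp [idList]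

theorem mem_idList {n x : ℕ} : x ∈ idList n ↔ 1 ≤ x ∧ x ≤ n := by
  simp only [idList, mem_map, mem_range]
  exact ⟨by rintro ⟨i, hi, rfl⟩; omega, fun h => ⟨x - 1, by omega, by omega⟩⟩

theorem nodup_idList (n : ℕ) : (idList n).Nodup :=
  nodup_range.map fun _ _ => Nat.succ_inj.1

theorem pairwise_idList (n : ℕ) : (idList n).Pairwise (· ≤ ·) :=
  pairwise_le_range.map _ fun _ _ => Nat.succ_le_succ

theorem idList_succ (n : ℕ) : idList (n + 1) = 1 :: (idList n).map (· + 1) := by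
  simp [idList, range_succ_eq_map]

theorem idxOf_one_idList {n : ℕ} (hn : 1 ≤ n) : (idList n).idxOf 1 = 0 := by
  obtain ⟨m, rfl⟩ := Nat.exists_eq_add_of_le' hn
  rw [idList_succ, idxOf_cons_self]

namespace IsPermList

variable {n : ℕ} {σ : List ℕ}

theorem length_eq (hσ : IsPermList n σ) : σ.length = n := by
  rw [Perm.length_eq hσ, length_idList]

theorem nodup (hσ : IsPermList n σ) : σ.Nodup :=
  (Perm.nodup_iff hσ).2 (nodup_idList n)

theorem one_mem (hσ : IsPermList n σ) (hn : 1 ≤ n) : 1 ∈ σ :=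
  (Perm.mem_iff hσ).2 (mem_idList.2 ⟨le_rfl, hn⟩)

theorem one_le (hσ : IsPermList n σ) : ∀ x ∈ σ, 1 ≤ x :=
  fun _ hx => (mem_idList.1 (Perm.subset hσ hx)).1

theorem eq_idList_of_pairwise (hσ : IsPermList n σ) (hs : σ.Pairwise (· ≤ ·)) : σ = idList n :=
  Perm.eq_of_pairwise (fun _ _ _ _ => le_antisymm) hs (pairwise_idList n) hσ

theorem iterate_bpass (hσ : IsPermList n σ) (k : ℕ) : IsPermList n (bpass^[k] σ) :=
  (iterate_bpass_perm k σ).trans hσ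

end IsPermList

theorem isNodeAt_idList_iff {n : ℕ} (hn : 1 ≤ n) {σ : List ℕ} :
    IsNodeAt n (idList n) σ (n - 1) ↔ IsPermList n σ ∧ σ.idxOf 1 = n - 1 := by
  constructor
  · rintro ⟨hσ, -, hslow⟩
    refine ⟨hσ, ?_⟩
    have hlen := hσ.length_eq
    have hlt := idxOf_lt_length_iff.2 (hσ.one_mem hn)
    by_contra hne
    refine hslow (n - 2) (by omega) ((hσ.iterate_bpass _).eq_idList_of_pairwise ?_)
    exact pairwise_iterate_bpass_of_idxOf_le (hσ.one_mem hn) hσ.one_le (by omega) (by omega)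
  · rintro ⟨hσ, hidx⟩
    have hlen := hσ.length_eq
    refine ⟨hσ, (hσ.iterate_bpass _).eq_idList_of_pairwise
      (pairwise_iterate_bpass_of_length_le (by omega)), fun i hi h => ?_⟩
    have := idxOf_iterate_bpass_of_forall_le (hσ.one_mem hn) hσ.one_le i
    rw [h, idxOf_one_idList hn] at this
    omega

theorem List.Nodup.getLast?_eq_some_iff {α : Type*} [DecidableEq α] {l : List α} {a : α}
    (hl : l.Nodup) (ha : a ∈ l) : l.getLast? = some a ↔ l.idxOf a = l.length - 1 := by
  have hlt := idxOf_lt_length_iff.2 ha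
  rw [getLast?_eq_getElem?]
  constructor
  · intro h
    obtain ⟨hi, rfl⟩ := List.getElem?_eq_some_iff.1 h
    exact hl.idxOf_getElem _ hi
  · intro h
    rw [← h, getElem?_eq_getElem hlt, getElem_idxOf]

theorem setOf_perm_cons_getLast?_eq {α : Type*} (a : α) (L : List α) :
    {σ | σ ~ a :: L ∧ σ.getLast? = some a} = (· ++ [a]) '' {l | l ~ L} := by
  ext σ
  simp only [Set.mem_ofPred_eq, Set.mem_image]
  constructor
  · rintro ⟨hσ, hlast⟩
    refine ⟨σ.dropLast, ?_, dropLast_append_getLast? a hlast⟩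
    rw [← perm_append_right_iff [a], dropLast_append_getLast? a hlast]
    exact hσ.trans (perm_append_singleton a L).symm
  · rintro ⟨l, hl, rfl⟩
    exact ⟨(hl.append_right [a]).trans (perm_append_singleton a L), getLast?_concat⟩

theorem ncard_setOf_perm {α : Type*} [DecidableEq α] {L : List α} (hL : L.Nodup) :
    {l | l ~ L}.ncard = L.length.factorial := by
  have : {l | l ~ L} = ↑L.permutations.toFinset := by ext; simp [mem_permutations]
  rw [this, Set.ncard_coe_finset, toFinset_card_of_nodup (nodup_permutations L hL),
    length_permutations]

theorem setOf_isNodeAt_idList {n : ℕ} (hn : 1 ≤ n) :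
    {σ | IsNodeAt n (idList n) σ (n - 1)} = {σ | IsPermList n σ ∧ σ.getLast? = some 1} := by
  ext σ
  simp only [Set.mem_ofPred_eq, isNodeAt_idList_iff hn]
  exact and_congr_right fun hσ => by
    rw [hσ.nodup.getLast?_eq_some_iff (hσ.one_mem hn), hσ.length_eq]

theorem ncard_setOf_isPermList_getLast?_eq_one (n : ℕ) :
    {σ | IsPermList (n + 1) σ ∧ σ.getLast? = some 1}.ncard = n.factorial := by
  have hnodup := nodup_idList (n + 1)
  rw [idList_succ, nodup_cons] at hnodup
  simp only [IsPermList, idList_succ]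
  rw [setOf_perm_cons_getLast?_eq, Set.ncard_image_of_injective _ (append_left_injective [1]),
    ncard_setOf_perm hnodup.2, length_map, length_idList]

/-- The permutations of size `n` requiring exactly `n-1` passes of bubblesort are
exactly those ending with the entry `1`, and there are `(n-1)!` of them. -/
theorem stmt_15 (n : ℕ) (hn : 1 ≤ n) :
    {σ : List ℕ | IsNodeAt n (idList n) σ (n - 1)} =
      {σ : List ℕ | IsPermList n σ ∧ σ.getLast? = some 1} ∧
    Set.ncard {σ : List ℕ | IsNodeAt n (idList n) σ (n - 1)} = Nat.factorial (n - 1) := by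
  refine ⟨setOf_isNodeAt_idList hn, ?_⟩
  obtain ⟨m, rfl⟩ := Nat.exists_eq_add_of_le' hn
  rw [setOf_isNodeAt_idList hn, ncard_setOf_isPermList_getLast?_eq_one, Nat.add_sub_cancel]
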